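/- In the fixed-design model, assume rank(A) ≥ k and σ_k(A) > σ_{k+1}(A). The PCR solution x_k := V_{A,k}(A V_{A,k})^+ b satisfies 𝔈(x_k) ≤ ‖x*‖₂²·σ_{k+1}(A)²/n + σ²k/n. -/

import Mathlib

open Matrix MeasureTheory

noncomputable section

/-- Euclidean norm of a vector in `ℝ^n`. -/
def vnorm {n : ℕ} (v : Fin n → ℝ) : ℝ := Real.sqrt (∑ i, v i ^ 2)

/-- Spectral norm of a matrix (operator norm as a map between Euclidean spaces). -/
def spec {m n : ℕ} (M : Matrix (Fin m) (Fin n) ℝ) : ℝ :=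
  ‖LinearMap.toContinuousLinearMap (Matrix.toEuclideanLin M)‖

/-- The four Moore-Penrose conditions. -/
def IsMP {m n : ℕ} (X : Matrix (Fin m) (Fin n) ℝ) (Y : Matrix (Fin n) (Fin m) ℝ) : Prop :=
  X * Y * X = X ∧ Y * X * Y = Y ∧ (X * Y)ᵀ = X * Y ∧ (Y * X)ᵀ = Y * X

/-- The Moore-Penrose pseudoinverse (it always exists and is unique, so this choice-based
definition picks out exactly the Moore-Penrose pseudoinverse). -/
def pinv {m n : ℕ} (X : Matrix (Fin m) (Fin n) ℝ) : Matrix (Fin n) (Fin m) ℝ := by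
  classical exact if h : ∃ Y, IsMP X Y then h.choose else 0

/-- Orthogonal projection onto the column space of a matrix: `P_X = X X⁺`. -/
def projCol {m n : ℕ} (X : Matrix (Fin m) (Fin n) ℝ) : Matrix (Fin m) (Fin m) ℝ := X * pinv X

/-- Distance between column spaces: `d₂(U, W) = ‖P_U - P_W‖₂`. -/
def d2 {m p q : ℕ} (U : Matrix (Fin m) (Fin p) ℝ) (W : Matrix (Fin m) (Fin q) ℝ) : ℝ :=
  spec (projCol U - projCol W)

/-- `(U, s, V)` is a thin SVD of `X`: orthonormal columns, nonincreasing nonnegative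
singular values, and `X = U (diag s) Vᵀ`. -/
def IsThinSVD {m n p : ℕ} (X : Matrix (Fin m) (Fin n) ℝ) (U : Matrix (Fin m) (Fin p) ℝ)
    (s : Fin p → ℝ) (V : Matrix (Fin n) (Fin p) ℝ) : Prop :=
  Uᵀ * U = 1 ∧ Vᵀ * V = 1 ∧ Antitone s ∧ (∀ i, 0 ≤ s i) ∧ X = U * Matrix.diagonal s * Vᵀ

/-- The matrix of the first `k` columns. -/
def firstCols {m p : ℕ} (U : Matrix (Fin m) (Fin p) ℝ) (k : ℕ) (h : k ≤ p) :
    Matrix (Fin m) (Fin k) ℝ := U.submatrix id (Fin.castLE h)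

/-- The matrix of the remaining columns (columns `k+1, …, p` in 1-based indexing). -/
def tailCols {m p : ℕ} (U : Matrix (Fin m) (Fin p) ℝ) (k : ℕ) (h : k ≤ p) :
    Matrix (Fin m) (Fin (p - k)) ℝ :=
  U.submatrix id (fun j => ⟨k + j.1, by have := j.2; omega⟩)

/-- `sv s i` is the `i`-th singular value (1-indexed), `0` past the end. -/
def sv {p : ℕ} (s : Fin p → ℝ) (i : ℕ) : ℝ := by
  classical exact if h : i - 1 < p then s ⟨i - 1, h⟩ else 0

end

/-!
Write `A = U diag(s) Vᵀ` and let `U_k`, `V_k` be the leading `k` singular vectors. The gap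
`σ_k > σ_{k+1} ≥ 0` makes the first `k` singular values nonzero, so `A V_k = U_k diag(s_{1..k})`
has pseudoinverse `diag(s_{1..k})⁻¹ U_kᵀ`, and `A x_k = P b` with `P = U_k U_kᵀ`. Since the
columns of `U_k` lie in the column space of `A`, `P P_A = P`, hence
`A x_k - A x* = (P A - A) x* + P ξ`. Now `P A - A = U diag(t) Vᵀ` with `|t_l| ≤ σ_{k+1}`, which
bounds the bias, while the noise term has expectation `σ² ‖P‖_F² = σ² k`, the cross term
vanishing because `ξ` is centred.
-/

section MoorePenrose

variable {m n : ℕ} {X : Matrix (Fin m) (Fin n) ℝ} {Y Z : Matrix (Fin n) (Fin m) ℝ}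

theorem IsMP.unique (hY : IsMP X Y) (hZ : IsMP X Z) : Y = Z := by
  obtain ⟨hY1, hY2, hY3, hY4⟩ := hY
  obtain ⟨hZ1, hZ2, hZ3, hZ4⟩ := hZ
  have hXY : X * Y = X * Z := by
    calc X * Y = (X * Z) * (X * Y) := by rw [← Matrix.mul_assoc, hZ1]
    _ = (X * Z)ᵀ * (X * Y)ᵀ := by rw [hZ3, hY3]
    _ = (X * Y * X * Z)ᵀ := by simp only [transpose_mul, Matrix.mul_assoc]
    _ = X * Z := by rw [hY1, hZ3]
  have hYX : Y * X = Z * X := by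
    calc Y * X = (Y * X) * (Z * X) := by rw [Matrix.mul_assoc, ← Matrix.mul_assoc X, hZ1]
    _ = (Y * X)ᵀ * (Z * X)ᵀ := by rw [hZ4, hY4]
    _ = (Z * (X * Y * X))ᵀ := by simp only [transpose_mul, Matrix.mul_assoc]
    _ = Z * X := by rw [hY1, hZ4]
  calc Y = Y * X * Y := hY2.symm
  _ = Z * X * Z := by rw [Matrix.mul_assoc, hXY, ← Matrix.mul_assoc, hYX]
  _ = Z := hZ2

theorem IsMP.pinv_eq (hY : IsMP X Y) : pinv X = Y := by
  have h : ∃ Y, IsMP X Y := ⟨Y, hY⟩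
  rw [pinv, dif_pos h]
  exact h.choose_spec.unique hY

theorem IsMP.transpose_mul_mul_eq (hY : IsMP X Y) {q : ℕ} (W : Matrix (Fin n) (Fin q) ℝ) :
    (X * W)ᵀ * (X * Y) = (X * W)ᵀ := by
  rw [← hY.2.2.1, ← transpose_mul, ← Matrix.mul_assoc, hY.1]

end MoorePenrose

section Orthonormal

variable {m n p : ℕ} {U : Matrix (Fin m) (Fin p) ℝ} {V : Matrix (Fin n) (Fin p) ℝ}

theorem transpose_mul_mul_cancel (hV : Vᵀ * V = 1) {q : ℕ} (M : Matrix (Fin p) (Fin q) ℝ) :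
    Vᵀ * (V * M) = M := by
  rw [← Matrix.mul_assoc, hV, Matrix.one_mul]

theorem diagonal_mul_diagonal_mul {q : ℕ} (s t : Fin p → ℝ) (M : Matrix (Fin p) (Fin q) ℝ) :
    diagonal s * (diagonal t * M) = diagonal (s * t) * M := by
  rw [← Matrix.mul_assoc, diagonal_mul_diagonal]; rfl

theorem isMP_mul_diagonal_mul_transpose (hU : Uᵀ * U = 1) (hV : Vᵀ * V = 1) (s : Fin p → ℝ) :
    IsMP (U * diagonal s * Vᵀ) (V * diagonal s⁻¹ * Uᵀ) := by
  have hss : s * s⁻¹ * s = s := funext fun i => mul_inv_mul_cancel (s i)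
  have hs's : s * s⁻¹ * s⁻¹ = s⁻¹ := funext fun i => by
    rcases eq_or_ne (s i) 0 with h | h <;> simp [h]
  refine ⟨?_, ?_, ?_, ?_⟩ <;>
    simp only [Matrix.mul_assoc, transpose_mul, transpose_transpose, diagonal_transpose,
      transpose_mul_mul_cancel hU, transpose_mul_mul_cancel hV, diagonal_mul_diagonal_mul,
      hss, hs's, mul_comm s⁻¹ s]

end Orthonormal

section FirstCols

variable {m n p k : ℕ} (h : k ≤ p)

def firstBasisCols : Matrix (Fin p) (Fin k) ℝ := firstCols 1 k h

theorem firstCols_eq_mul (U : Matrix (Fin m) (Fin p) ℝ) :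
    firstCols U k h = U * firstBasisCols h := by
  ext i j
  simp [firstBasisCols, firstCols, mul_apply, one_apply]

theorem transpose_firstBasisCols_mul : (firstBasisCols h)ᵀ * firstBasisCols h = 1 := by
  ext i j
  simp [firstBasisCols, firstCols, mul_apply, one_apply, Fin.castLE_inj]

theorem firstBasisCols_mul_transpose :
    firstBasisCols h * (firstBasisCols h)ᵀ
      = diagonal fun l : Fin p => if (l : ℕ) < k then 1 else 0 := by
  ext i j
  simp only [firstBasisCols, firstCols, mul_apply, transpose_apply, submatrix_apply, id_eq,
    one_apply, diagonal_apply, mul_ite, mul_one, mul_zero]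
  rcases eq_or_ne i j with rfl | hij
  · by_cases hi : (i : ℕ) < k
    · rw [Finset.sum_eq_single ⟨i, hi⟩] <;> simp +contextual [Fin.ext_iff, hi, eq_comm]
    · refine (Finset.sum_eq_zero fun x _ => ?_).trans (by simp [hi])
      have hix : i ≠ Fin.castLE h x := fun hix => hi (hix ▸ x.isLt)
      simp [hix]
  · refine (Finset.sum_eq_zero fun x _ => ?_).trans (by simp [hij])
    split_ifs with hj hi
    exacts [absurd (hi.trans hj.symm) hij, rfl, rfl]

theorem diagonal_mul_firstBasisCols (s : Fin p → ℝ) :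
    diagonal s * firstBasisCols h = firstBasisCols h * diagonal (s ∘ Fin.castLE h) := by
  ext i j
  simp only [firstBasisCols, firstCols, diagonal_mul, mul_diagonal, submatrix_apply, id_eq,
    one_apply, mul_ite, ite_mul, mul_one, one_mul, mul_zero, zero_mul]
  split_ifs with hij <;> simp [hij]

variable {U : Matrix (Fin m) (Fin p) ℝ} {V : Matrix (Fin n) (Fin p) ℝ}

theorem transpose_firstCols_mul (hU : Uᵀ * U = 1) :
    (firstCols U k h)ᵀ * firstCols U k h = 1 := by
  rw [firstCols_eq_mul, transpose_mul, Matrix.mul_assoc, transpose_mul_mul_cancel hU,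
    transpose_firstBasisCols_mul]

variable {A : Matrix (Fin m) (Fin n) ℝ} {s : Fin p → ℝ}

theorem mul_firstCols_of_eq (hV : Vᵀ * V = 1) (hA : A = U * diagonal s * Vᵀ) :
    A * firstCols V k h = firstCols U k h * diagonal (s ∘ Fin.castLE h) := by
  rw [hA, firstCols_eq_mul h V, firstCols_eq_mul h U]
  simp only [Matrix.mul_assoc, transpose_mul_mul_cancel hV, diagonal_mul_firstBasisCols]

theorem firstCols_mul_transpose_mul_of_eq (hU : Uᵀ * U = 1) (hA : A = U * diagonal s * Vᵀ) :
    firstCols U k h * (firstCols U k h)ᵀ * A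
      = U * diagonal (fun l : Fin p => if (l : ℕ) < k then s l else 0) * Vᵀ := by
  rw [hA, firstCols_eq_mul h U, transpose_mul]
  calc U * firstBasisCols h * ((firstBasisCols h)ᵀ * Uᵀ) * (U * diagonal s * Vᵀ)
      = U * (firstBasisCols h * (firstBasisCols h)ᵀ * diagonal s) * Vᵀ := by
        simp only [Matrix.mul_assoc, transpose_mul_mul_cancel hU]
    _ = _ := by
        rw [firstBasisCols_mul_transpose, diagonal_mul_diagonal]
        simp only [ite_mul, one_mul, zero_mul]

end FirstCols

section Norms

variable {m n p : ℕ}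

theorem vnorm_nonneg (v : Fin n → ℝ) : 0 ≤ vnorm v := Real.sqrt_nonneg _

theorem vnorm_sq (v : Fin n → ℝ) : vnorm v ^ 2 = ∑ i, v i ^ 2 :=
  Real.sq_sqrt (Finset.sum_nonneg fun _ _ => sq_nonneg _)

theorem vnorm_sq_eq_dotProduct (v : Fin n → ℝ) : vnorm v ^ 2 = v ⬝ᵥ v := by
  rw [vnorm_sq]
  simp only [dotProduct, sq]

theorem dotProduct_le_vnorm_mul_vnorm (v w : Fin n → ℝ) : v ⬝ᵥ w ≤ vnorm v * vnorm w :=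
  Real.sum_mul_le_sqrt_mul_sqrt _ v w

theorem vnorm_mulVec_of_transpose_mul_self {U : Matrix (Fin m) (Fin p) ℝ} (hU : Uᵀ * U = 1)
    (z : Fin p → ℝ) : vnorm (U *ᵥ z) = vnorm z := by
  rw [← sq_eq_sq₀ (vnorm_nonneg _) (vnorm_nonneg _), vnorm_sq_eq_dotProduct,
    vnorm_sq_eq_dotProduct, dotProduct_mulVec, vecMul_mulVec, ← mulVec_transpose, hU,
    transpose_one, one_mulVec]

theorem vnorm_transpose_mulVec_le {V : Matrix (Fin n) (Fin p) ℝ} (hV : Vᵀ * V = 1)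
    (x : Fin n → ℝ) : vnorm (Vᵀ *ᵥ x) ≤ vnorm x := by
  -- Cauchy–Schwarz: `‖Vᵀ x‖² = x ⬝ᵥ V Vᵀ x ≤ ‖x‖ ‖V Vᵀ x‖ = ‖x‖ ‖Vᵀ x‖`.
  have h := dotProduct_le_vnorm_mul_vnorm x (V *ᵥ (Vᵀ *ᵥ x))
  rw [vnorm_mulVec_of_transpose_mul_self hV, dotProduct_mulVec, ← mulVec_transpose,
    ← vnorm_sq_eq_dotProduct] at h
  nlinarith [vnorm_nonneg x, vnorm_nonneg (Vᵀ *ᵥ x)]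

theorem vnorm_diagonal_mulVec_le {t : Fin p → ℝ} {C : ℝ} (hC : 0 ≤ C) (ht : ∀ l, |t l| ≤ C)
    (y : Fin p → ℝ) : vnorm (diagonal t *ᵥ y) ≤ C * vnorm y := by
  rw [← pow_le_pow_iff_left₀ (vnorm_nonneg _) (by positivity [vnorm_nonneg y]) two_ne_zero,
    mul_pow, vnorm_sq, vnorm_sq, Finset.mul_sum]
  refine Finset.sum_le_sum fun l _ => ?_
  rw [mulVec_diagonal, mul_pow]
  exact mul_le_mul_of_nonneg_right (sq_le_sq' (abs_le.mp (ht l)).1 (abs_le.mp (ht l)).2)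
    (sq_nonneg _)

theorem vnorm_mulVec_le_of_eq_svd {U : Matrix (Fin m) (Fin p) ℝ}
    {V : Matrix (Fin n) (Fin p) ℝ} (hU : Uᵀ * U = 1) (hV : Vᵀ * V = 1) {t : Fin p → ℝ}
    {C : ℝ} (hC : 0 ≤ C) (ht : ∀ l, |t l| ≤ C) (x : Fin n → ℝ) :
    vnorm ((U * diagonal t * Vᵀ) *ᵥ x) ≤ C * vnorm x := by
  rw [← mulVec_mulVec, ← mulVec_mulVec, vnorm_mulVec_of_transpose_mul_self hU]
  exact (vnorm_diagonal_mulVec_le hC ht _).trans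
    (mul_le_mul_of_nonneg_left (vnorm_transpose_mulVec_le hV x) hC)

theorem sum_sq_mul_transpose_self {k : ℕ} {U : Matrix (Fin m) (Fin k) ℝ} (hU : Uᵀ * U = 1) :
    ∑ i, ∑ j, (U * Uᵀ) i j ^ 2 = k := by
  have hfrob (M : Matrix (Fin m) (Fin m) ℝ) : ∑ i, ∑ j, M i j ^ 2 = trace (M * Mᵀ) := by
    simp [trace, mul_apply, sq]
  have hidem : U * Uᵀ * (U * Uᵀ)ᵀ = U * Uᵀ := by
    rw [transpose_mul, transpose_transpose, Matrix.mul_assoc, transpose_mul_mul_cancel hU]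
  rw [hfrob, hidem, trace_mul_comm, hU, trace_one, Fintype.card_fin]

end Norms

section SingularValues

variable {p : ℕ} {s : Fin p → ℝ}

theorem sv_nonneg (hs : ∀ i, 0 ≤ s i) (j : ℕ) : 0 ≤ sv s j := by
  unfold sv; split
  exacts [hs _, le_rfl]

theorem Antitone.le_sv_succ (hs : Antitone s) {k : ℕ} {l : Fin p} (hl : k ≤ l) :
    s l ≤ sv s (k + 1) := by
  rw [sv, dif_pos (by omega)]
  exact hs (Fin.mk_le_mk.mpr (by omega))

theorem Antitone.pos_of_sv_lt {k : ℕ} (hs : Antitone s) (h0 : ∀ i, 0 ≤ s i)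
    (hgap : sv s (k + 1) < sv s k) {j : Fin p} (hj : (j : ℕ) < k) : 0 < s j := by
  have hk : k - 1 < p := by
    by_contra hk
    have hzero : sv s k = 0 := by simp [sv, hk]
    linarith [sv_nonneg h0 (k + 1)]
  have hpos : 0 < s ⟨k - 1, hk⟩ := by
    simpa [sv, dif_pos hk] using (sv_nonneg h0 (k + 1)).trans_lt hgap
  exact hpos.trans_le (hs (Fin.mk_le_mk.mpr (by omega)))

theorem Antitone.abs_truncate_sub_le_sv (hs : Antitone s) (h0 : ∀ i, 0 ≤ s i) (k : ℕ)
    (l : Fin p) : |(if (l : ℕ) < k then s l else 0) - s l| ≤ sv s (k + 1) := by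
  split_ifs with hl
  · simpa using sv_nonneg h0 (k + 1)
  · simpa [abs_of_nonneg (h0 l)] using hs.le_sv_succ (not_lt.mp hl)

end SingularValues

section Noise

open ProbabilityTheory

variable {Ω : Type*} [MeasurableSpace Ω] {μ : Measure Ω} {n : ℕ} {ξ : Ω → Fin n → ℝ} {σ2 : ℝ}

theorem integral_dotProduct_eq_zero [IsFiniteMeasure μ]
    (hL2 : ∀ i, MemLp (fun ω => ξ ω i) 2 μ) (hmean : ∀ i, ∫ ω, ξ ω i ∂μ = 0)
    (a : Fin n → ℝ) : ∫ ω, a ⬝ᵥ ξ ω ∂μ = 0 := by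
  simp only [dotProduct]
  rw [integral_finsetSum _ fun j _ => ((hL2 j).integrable one_le_two).const_mul (a j)]
  simp [integral_const_mul, hmean]

theorem integral_mul_coord (hL2 : ∀ i, MemLp (fun ω => ξ ω i) 2 μ)
    (hindep : iIndepFun (fun i ω => ξ ω i) μ) (hmean : ∀ i, ∫ ω, ξ ω i ∂μ = 0)
    (hvar : ∀ i, ∫ ω, ξ ω i ^ 2 ∂μ = σ2) (i j : Fin n) :
    ∫ ω, ξ ω i * ξ ω j ∂μ = if i = j then σ2 else 0 := by
  split_ifs with hij
  · simp [hij, ← hvar j, sq]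
  · have h := (hindep.indepFun hij).integral_mul_eq_mul_integral
      (hL2 i).aestronglyMeasurable (hL2 j).aestronglyMeasurable
    simpa [hmean] using h

theorem integral_dotProduct_sq (hL2 : ∀ i, MemLp (fun ω => ξ ω i) 2 μ)
    (hindep : iIndepFun (fun i ω => ξ ω i) μ) (hmean : ∀ i, ∫ ω, ξ ω i ∂μ = 0)
    (hvar : ∀ i, ∫ ω, ξ ω i ^ 2 ∂μ = σ2) (a : Fin n → ℝ) :
    ∫ ω, (a ⬝ᵥ ξ ω) ^ 2 ∂μ = σ2 * ∑ i, a i ^ 2 := by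
  have hexpand (ω : Ω) : (a ⬝ᵥ ξ ω) ^ 2 = ∑ i, ∑ j, a i * a j * (ξ ω i * ξ ω j) := by
    simp only [dotProduct, sq, Finset.sum_mul_sum]
    exact Finset.sum_congr rfl fun i _ => Finset.sum_congr rfl fun j _ => by ring
  have hint (i j : Fin n) : Integrable (fun ω => a i * a j * (ξ ω i * ξ ω j)) μ :=
    ((hL2 i).integrable_mul (hL2 j)).const_mul _
  simp only [hexpand]
  rw [integral_finsetSum _ fun i _ => integrable_finsetSum _ fun j _ => hint i j]
  simp only [integral_finsetSum _ fun j _ => hint _ j, integral_const_mul,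
    integral_mul_coord hL2 hindep hmean hvar, mul_ite, mul_zero, Finset.sum_ite_eq,
    Finset.mem_univ, if_true, Finset.mul_sum]
  exact Finset.sum_congr rfl fun i _ => by ring

theorem integral_vnorm_add_mulVec_sq [IsProbabilityMeasure μ]
    (hL2 : ∀ i, MemLp (fun ω => ξ ω i) 2 μ)
    (hindep : iIndepFun (fun i ω => ξ ω i) μ) (hmean : ∀ i, ∫ ω, ξ ω i ∂μ = 0)
    (hvar : ∀ i, ∫ ω, ξ ω i ^ 2 ∂μ = σ2) {m : ℕ} (c : Fin m → ℝ)
    (M : Matrix (Fin m) (Fin n) ℝ) :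
    ∫ ω, vnorm (c + M *ᵥ ξ ω) ^ 2 ∂μ = vnorm c ^ 2 + σ2 * ∑ i, ∑ j, M i j ^ 2 := by
  have hL2row (i : Fin m) : MemLp (fun ω => M i ⬝ᵥ ξ ω) 2 μ :=
    memLp_finsetSum _ fun j _ => (hL2 j).const_mul (M i j)
  have hexpand (ω : Ω) : vnorm (c + M *ᵥ ξ ω) ^ 2
      = ∑ i, (c i ^ 2 + (2 * c i * (M i ⬝ᵥ ξ ω) + (M i ⬝ᵥ ξ ω) ^ 2)) := by
    rw [vnorm_sq]
    exact Finset.sum_congr rfl fun i _ => by simp only [Pi.add_apply, mulVec]; ring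
  have hlin (i : Fin m) : Integrable (fun ω => 2 * c i * (M i ⬝ᵥ ξ ω)) μ :=
    ((hL2row i).integrable one_le_two).const_mul _
  have hint (i : Fin m) :
      Integrable (fun ω => 2 * c i * (M i ⬝ᵥ ξ ω) + (M i ⬝ᵥ ξ ω) ^ 2) μ :=
    (hlin i).add (hL2row i).integrable_sq
  have hterm (i : Fin m) :
      Integrable (fun ω => c i ^ 2 + (2 * c i * (M i ⬝ᵥ ξ ω) + (M i ⬝ᵥ ξ ω) ^ 2)) μ :=
    (integrable_const _).add (hint i)
  simp only [hexpand]
  rw [integral_finsetSum _ fun i _ => hterm i]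
  simp only [integral_add (integrable_const _) (hint _),
    integral_add (hlin _) (hL2row _).integrable_sq, integral_const, integral_const_mul,
    integral_dotProduct_eq_zero hL2 hmean, integral_dotProduct_sq hL2 hindep hmean hvar]
  simp [vnorm_sq, Finset.sum_add_distrib, Finset.mul_sum]

end Noise

section Projections

variable {m n p : ℕ}

theorem mul_diagonal_mul_diagonal_inv {s : Fin p → ℝ} (hs : ∀ i, s i ≠ 0)
    (M : Matrix (Fin m) (Fin p) ℝ) : M * diagonal s * diagonal s⁻¹ = M := by
  rw [Matrix.mul_assoc, diagonal_mul_diagonal]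
  simp [hs]

theorem projCol_mul_diagonal {U : Matrix (Fin m) (Fin p) ℝ} (hU : Uᵀ * U = 1)
    {s : Fin p → ℝ} (hs : ∀ i, s i ≠ 0) : projCol (U * diagonal s) = U * Uᵀ := by
  have hMP := isMP_mul_diagonal_mul_transpose hU
    (by simp : (1 : Matrix (Fin p) (Fin p) ℝ)ᵀ * 1 = 1) s
  simp only [transpose_one, Matrix.mul_one, Matrix.one_mul] at hMP
  rw [projCol, hMP.pinv_eq, ← Matrix.mul_assoc, mul_diagonal_mul_diagonal_inv hs]

theorem IsMP.mul_transpose_mul_projCol {X : Matrix (Fin m) (Fin n) ℝ}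
    {Y : Matrix (Fin n) (Fin m) ℝ} (hY : IsMP X Y) (W : Matrix (Fin n) (Fin p) ℝ) :
    X * W * (X * W)ᵀ * projCol X = X * W * (X * W)ᵀ := by
  rw [projCol, hY.pinv_eq, Matrix.mul_assoc, hY.transpose_mul_mul_eq]

end Projections

section PCR

variable {m n p k : ℕ} (h : k ≤ p) {A : Matrix (Fin m) (Fin n) ℝ}
  {U : Matrix (Fin m) (Fin p) ℝ} {s : Fin p → ℝ} {V : Matrix (Fin n) (Fin p) ℝ}

theorem mul_firstCols_mul_pinv_of_eq (hU : Uᵀ * U = 1) (hV : Vᵀ * V = 1)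
    (hA : A = U * diagonal s * Vᵀ) (hs : ∀ j : Fin k, s (Fin.castLE h j) ≠ 0) :
    A * (firstCols V k h * pinv (A * firstCols V k h))
      = firstCols U k h * (firstCols U k h)ᵀ := by
  rw [← Matrix.mul_assoc, ← projCol, mul_firstCols_of_eq h hV hA,
    projCol_mul_diagonal (s := s ∘ Fin.castLE h) (transpose_firstCols_mul h hU) hs]

theorem firstCols_mul_transpose_mul_projCol_of_eq (hU : Uᵀ * U = 1) (hV : Vᵀ * V = 1)
    (hA : A = U * diagonal s * Vᵀ) (hs : ∀ j : Fin k, s (Fin.castLE h j) ≠ 0) :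
    firstCols U k h * (firstCols U k h)ᵀ * projCol A = firstCols U k h * (firstCols U k h)ᵀ := by
  set W := firstCols V k h * diagonal (s ∘ Fin.castLE h)⁻¹
  have hAW : A * W = firstCols U k h := by
    rw [← Matrix.mul_assoc, mul_firstCols_of_eq h hV hA,
      mul_diagonal_mul_diagonal_inv (s := s ∘ Fin.castLE h) hs]
  have hMP : IsMP A (V * diagonal s⁻¹ * Uᵀ) := hA ▸ isMP_mul_diagonal_mul_transpose hU hV s
  simpa only [hAW] using hMP.mul_transpose_mul_projCol W

theorem vnorm_firstCols_mul_transpose_mul_sub_mulVec_le (hU : Uᵀ * U = 1) (hV : Vᵀ * V = 1)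
    (hA : A = U * diagonal s * Vᵀ) (hs : Antitone s) (h0 : ∀ i, 0 ≤ s i) (x : Fin n → ℝ) :
    vnorm ((firstCols U k h * (firstCols U k h)ᵀ * A - A) *ᵥ x) ≤ sv s (k + 1) * vnorm x := by
  subst hA
  rw [firstCols_mul_transpose_mul_of_eq h hU rfl, ← Matrix.sub_mul, ← Matrix.mul_sub,
    diagonal_sub]
  exact vnorm_mulVec_le_of_eq_svd hU hV (sv_nonneg h0 _) (hs.abs_truncate_sub_le_sv h0 k) x

end PCR

open ProbabilityTheory in
theorem statement8_general
    {n d k : ℕ}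
    (A : Matrix (Fin n) (Fin d) ℝ)
    (UA : Matrix (Fin n) (Fin (min n d)) ℝ) (sA : Fin (min n d) → ℝ)
    (VA : Matrix (Fin d) (Fin (min n d)) ℝ)
    (hSVD : IsThinSVD A UA sA VA)
    (hkp : k ≤ min n d)
    (hgap : sv sA (k + 1) < sv sA k)
    -- the fixed-design statistical model
    {Ω : Type} [MeasurableSpace Ω] (μ : Measure Ω) [IsProbabilityMeasure μ]
    (ξ : Ω → Fin n → ℝ)
    (hL2 : ∀ i, MemLp (fun ω => ξ ω i) 2 μ)
    (hindep : iIndepFun (fun i ω => ξ ω i) μ)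
    (sig2 : ℝ)
    (hmean : ∀ i, ∫ ω, ξ ω i ∂μ = 0)
    (hvar : ∀ i, ∫ ω, (ξ ω i) ^ 2 ∂μ = sig2)
    (f : Fin n → ℝ) (xstar : Fin d → ℝ)
    (hxstar : A.mulVec xstar = (projCol A).mulVec f) :
    (∫ ω, vnorm (A.mulVec ((firstCols VA k hkp * pinv (A * firstCols VA k hkp)).mulVec
          (f + ξ ω)) - A.mulVec xstar) ^ 2 ∂μ) / (n : ℝ)
      ≤ vnorm xstar ^ 2 * sv sA (k + 1) ^ 2 / (n : ℝ) + sig2 * (k : ℝ) / (n : ℝ) := by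
  obtain ⟨hU, hV, hanti, hnonneg, hA⟩ := hSVD
  set Vk := firstCols VA k hkp
  set P := firstCols UA k hkp * (firstCols UA k hkp)ᵀ
  have hs (j : Fin k) : sA (Fin.castLE hkp j) ≠ 0 :=
    (hanti.pos_of_sv_lt hnonneg hgap j.isLt).ne'
  have hfit : A * (Vk * pinv (A * Vk)) = P := mul_firstCols_mul_pinv_of_eq hkp hU hV hA hs
  have hproj : P * projCol A = P := firstCols_mul_transpose_mul_projCol_of_eq hkp hU hV hA hs
  have herr (ω : Ω) : A *ᵥ ((Vk * pinv (A * Vk)) *ᵥ (f + ξ ω)) - A *ᵥ xstar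
      = (P * A - A) *ᵥ xstar + P *ᵥ ξ ω := by
    -- `P f = P P_A f = P A x*`
    rw [mulVec_mulVec, hfit, mulVec_add, ← hproj, ← mulVec_mulVec (v := f), ← hxstar,
      mulVec_mulVec, hproj, sub_mulVec]
    abel
  have hbias : vnorm ((P * A - A) *ᵥ xstar) ^ 2 ≤ vnorm xstar ^ 2 * sv sA (k + 1) ^ 2 := by
    rw [mul_comm, ← mul_pow]
    exact pow_le_pow_left₀ (vnorm_nonneg _)
      (vnorm_firstCols_mul_transpose_mul_sub_mulVec_le hkp hU hV hA hanti hnonneg xstar) 2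
  have hnoise : ∑ i, ∑ j, P i j ^ 2 = k :=
    sum_sq_mul_transpose_self (transpose_firstCols_mul hkp hU)
  calc (∫ ω, vnorm (A *ᵥ ((Vk * pinv (A * Vk)) *ᵥ (f + ξ ω)) - A *ᵥ xstar) ^ 2 ∂μ) / n
      = (vnorm ((P * A - A) *ᵥ xstar) ^ 2 + sig2 * k) / n := by
        simp only [herr, integral_vnorm_add_mulVec_sq hL2 hindep hmean hvar, hnoise]
    _ ≤ (vnorm xstar ^ 2 * sv sA (k + 1) ^ 2 + sig2 * k) / n := by gcongr
    _ = _ := add_div _ _ _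

open ProbabilityTheory in
/-- Corollary: excess risk of the PCR solution.
In the fixed-design model, `𝔈(x_k) ≤ ‖x*‖² σ_{k+1}(A)² / n + σ² k / n`, where
`x_k = V_{A,k}(A V_{A,k})⁺ b`. -/
theorem statement8
    {n d k : ℕ} (hk0 : 0 < k)
    (A : Matrix (Fin n) (Fin d) ℝ)
    (UA : Matrix (Fin n) (Fin (min n d)) ℝ) (sA : Fin (min n d) → ℝ)
    (VA : Matrix (Fin d) (Fin (min n d)) ℝ)
    (hSVD : IsThinSVD A UA sA VA)
    (hkrank : k ≤ A.rank) (hkp : k ≤ min n d)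
    (hgap : sv sA (k + 1) < sv sA k)
    -- the fixed-design statistical model
    {Ω : Type} [MeasurableSpace Ω] (μ : Measure Ω) [IsProbabilityMeasure μ]
    (ξ : Ω → Fin n → ℝ)
    (hmeas : ∀ i, Measurable fun ω => ξ ω i)
    (hL2 : ∀ i, MemLp (fun ω => ξ ω i) 2 μ)
    (hindep : iIndepFun (fun i ω => ξ ω i) μ)
    (sig2 : ℝ)
    (hmean : ∀ i, ∫ ω, ξ ω i ∂μ = 0)
    (hvar : ∀ i, ∫ ω, (ξ ω i) ^ 2 ∂μ = sig2)
    (f : Fin n → ℝ) (xstar : Fin d → ℝ)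
    (hxstar : A.mulVec xstar = (projCol A).mulVec f) :
    (∫ ω, vnorm (A.mulVec ((firstCols VA k hkp * pinv (A * firstCols VA k hkp)).mulVec
          (f + ξ ω)) - A.mulVec xstar) ^ 2 ∂μ) / (n : ℝ)
      ≤ vnorm xstar ^ 2 * sv sA (k + 1) ^ 2 / (n : ℝ) + sig2 * (k : ℝ) / (n : ℝ) :=
  statement8_general A UA sA VA hSVD hkp hgap μ ξ hL2 hindep sig2 hmean hvar f xstar hxstar
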